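/- Fix u > 0, let t ∈ (0,1) satisfy e^{−t}/(1−t) = 1+u, and set c = t·e^{−t}/u. Then c/(1 + (1/u)·T_1(u·c)) = 1 − t, where T_1(z) = z + Σ_{n≥1} n^n z^{n+1}/(n+1)!. -/

import Mathlib

/-- `T_1(z) = z + Σ_{n≥1} n^n z^{n+1}/(n+1)!`, as a function of a real variable. -/
noncomputable def Tone (z : ℝ) : ℝ :=
  z + ∑' n : ℕ, ((n : ℝ) + 1) ^ (n + 1) * z ^ (n + 2) / (Nat.factorial (n + 2))

/-!
Write `1 - T₁(z) = ∑ aₘ zᵐ / m!` with `a₀ = 1` and `aₘ = -(m - 1)^(m - 1)`. For small `s`,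
expanding `(s e^{-s})ᵐ = sᵐ ∑ₖ (-m s)ᵏ / k!` and summing along antidiagonals, the coefficient
of `s^N` is `(1 / N!) ∑ₘ C(N, m) aₘ (-m)^(N - m)`, which is `(-1)^N / N!` by Abel's identity
`∑ₘ C(N, m) aₘ (y - m)^(N - m) = (y - 1)^N` at `y = 0`. Hence `1 - T₁(s e^{-s}) = e^{-s}` near
`0`. For `0 < s < 1` we have `s e^{-s} < 1/e`, inside the disc of convergence, so both sides are
analytic there and the identity extends to `s = t`. The theorem is then the algebra
`e^{-t} = (1 + u)(1 - t)`.
-/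

open Real Finset Topology
open scoped Nat

theorem Summable.tsum_sum_antidiagonal {α : Type*} [AddCommMonoid α] [TopologicalSpace α]
    [ContinuousAdd α] [T3Space α] {f : ℕ × ℕ → α} (hf : Summable f) :
    ∑' n, ∑ p ∈ antidiagonal n, f p = ∑' p, f p := by
  let e := HasAntidiagonal.sigmaAntidiagonalEquivProd (A := ℕ)
  have he : Summable fun c ↦ f (e c) := e.summable_iff.mpr hf
  rw [← e.tsum_eq f, he.tsum_sigma' fun _ ↦ .of_finite]
  exact tsum_congr fun n ↦ (Finset.tsum_subtype _ f).symm

lemma Real.hasSum_pow_div_factorial (x : ℝ) : HasSum (fun n ↦ x ^ n / n !) (exp x) :=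
  Real.exp_eq_exp_ℝ ▸ NormedSpace.expSeries_div_hasSum_exp x

/-- The coefficients `x (x + k)^(k - 1)` of Abel's identity at `x = -1`. -/
def abelCoeff : ℕ → ℝ
  | 0 => 1
  | k + 1 => -(k : ℝ) ^ k

noncomputable def abelSum (n : ℕ) (y : ℝ) : ℝ :=
  ∑ k ∈ range (n + 1), (n.choose k : ℝ) * abelCoeff k * (y - k) ^ (n - k)

lemma abelCoeff_mul_one_sub_pow {n k : ℕ} (hk : k ≤ n + 1) :
    abelCoeff k * (1 - k) ^ (n + 1 - k) = -((-1) ^ (n + 1 - k) * ((k : ℝ) - 1) ^ n) := by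
  cases k with
  | zero => simp [abelCoeff, pow_succ, ← mul_pow]
  | succ k =>
    obtain ⟨m, rfl⟩ := Nat.exists_eq_add_of_le (Nat.le_of_succ_le_succ hk)
    rw [show k + m + 1 - (k + 1) = m by omega, abelCoeff]
    push_cast
    ring

lemma abelSum_succ_one (n : ℕ) : abelSum (n + 1) 1 = 0 := by
  -- up to sign, an `(n + 1)`-st forward difference of the degree-`n` polynomial `(x - 1)^n`
  have hdiff := fwdDiff_iter_comp_add (1 : ℝ) (fun x : ℝ ↦ x ^ n) (-1) (n + 1) 0
  rw [fwdDiff_iter_pow_eq_zero_of_lt (lt_add_one n), fwdDiff_iter_eq_sum_shift,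
    Pi.zero_apply] at hdiff
  rw [abelSum, ← neg_eq_zero, ← sum_neg_distrib, ← hdiff]
  refine sum_congr rfl fun k hk ↦ ?_
  rw [mul_assoc, abelCoeff_mul_one_sub_pow (Nat.lt_succ_iff.mp (mem_range.mp hk))]
  simp only [zsmul_eq_mul, nsmul_eq_mul]
  push_cast
  ring

lemma hasDerivAt_abelSum_succ (n : ℕ) (y : ℝ) :
    HasDerivAt (abelSum (n + 1)) ((n + 1) * abelSum n y) y := by
  have hterm (k : ℕ) :
      HasDerivAt (fun x ↦ ((n + 1).choose k : ℝ) * abelCoeff k * (x - k) ^ (n + 1 - k))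
        ((n + 1).choose k * abelCoeff k * ((n + 1 - k : ℕ) * (y - k) ^ (n - k))) y := by
    simpa [show n + 1 - k - 1 = n - k by omega] using
      (((hasDerivAt_id y).sub_const (k : ℝ)).pow (n + 1 - k)).const_mul
        (((n + 1).choose k : ℝ) * abelCoeff k)
  refine (HasDerivAt.fun_sum (u := range (n + 2)) fun k _ ↦ hterm k).congr_deriv ?_
  rw [sum_range_succ, abelSum, mul_sum]
  simp only [Nat.sub_self, Nat.cast_zero, zero_mul, mul_zero, add_zero]
  refine sum_congr rfl fun k _ ↦ ?_
  have hchoose := congrArg (Nat.cast (R := ℝ)) (Nat.choose_mul_succ_eq n k)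
  push_cast at hchoose
  linear_combination -(abelCoeff k * (y - k) ^ (n - k)) * hchoose

theorem abelSum_eq (n : ℕ) (y : ℝ) : abelSum n y = (y - 1) ^ n := by
  induction n generalizing y with
  | zero => simp [abelSum, abelCoeff]
  | succ n ih =>
    have hderiv (x : ℝ) : HasDerivAt (fun x ↦ abelSum (n + 1) x - (x - 1) ^ (n + 1)) 0 x := by
      simpa [ih] using
        (hasDerivAt_abelSum_succ n x).fun_sub (((hasDerivAt_id' x).sub_const 1).fun_pow (n + 1))
    have hconst := is_const_of_deriv_eq_zero (fun x ↦ (hderiv x).differentiableAt)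
      (fun x ↦ (hderiv x).deriv) y 1
    simp only [abelSum_succ_one, sub_self, zero_pow n.succ_ne_zero] at hconst
    linarith

lemma abs_abelCoeff_div_factorial_le (m : ℕ) : |abelCoeff m / m !| ≤ exp 1 ^ m := by
  cases m with
  | zero => simp [abelCoeff]
  | succ k =>
    rw [abelCoeff, abs_div, abs_neg, abs_pow, Nat.abs_cast, Nat.abs_cast, ← Real.exp_nat_mul,
      mul_one]
    calc (k : ℝ) ^ k / (k + 1)! ≤ k ^ k / k ! := by gcongr; exact k.le_succ
      _ ≤ exp k := pow_div_factorial_le_exp k k.cast_nonneg k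
      _ ≤ exp (k + 1 : ℕ) := by gcongr; simp

lemma summable_abs_abelCoeff_mul_pow {z : ℝ} (hz : |z| < exp (-1)) :
    Summable fun m ↦ |abelCoeff m / m !| * |z| ^ m := by
  have hratio : exp 1 * |z| < 1 := by
    calc exp 1 * |z| < exp 1 * exp (-1) := by gcongr
      _ = 1 := by rw [← exp_add]; simp
  refine .of_nonneg_of_le (fun m ↦ by positivity) (fun m ↦ ?_)
    (summable_geometric_of_lt_one (by positivity) hratio)
  rw [mul_pow]
  gcongr
  exact abs_abelCoeff_div_factorial_le m

lemma one_sub_tone_eq_tsum {z : ℝ} (hz : |z| < exp (-1)) :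
    1 - Tone z = ∑' m, abelCoeff m / m ! * z ^ m := by
  have hs : Summable fun m ↦ abelCoeff m / m ! * z ^ m :=
    .of_norm <| by
      simpa only [norm_mul, norm_pow, Real.norm_eq_abs] using summable_abs_abelCoeff_mul_pow hz
  have htail : ∑' i, abelCoeff (i + 2) / (i + 2)! * z ^ (i + 2) =
      -∑' n : ℕ, ((n : ℝ) + 1) ^ (n + 1) * z ^ (n + 2) / (n + 2)! := by
    rw [← tsum_neg]
    congr with n
    simp only [abelCoeff]
    push_cast
    ring
  rw [← hs.sum_add_tsum_nat_add 2, htail, Tone]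
  simp [sum_range_succ, abelCoeff]
  ring

lemma sum_antidiagonal_abelCoeff (N : ℕ) (s : ℝ) :
    ∑ p ∈ antidiagonal N, abelCoeff p.1 / p.1 ! * s ^ p.1 * ((-p.1 * s) ^ p.2 / p.2 !) =
      (-s) ^ N / N ! := by
  rw [Nat.sum_antidiagonal_eq_sum_range_succ_mk]
  calc _ = ∑ m ∈ range (N + 1),
        (N.choose m : ℝ) * abelCoeff m * (0 - m) ^ (N - m) * (s ^ N / N !) :=
        sum_congr rfl fun m hm ↦ ?_
    _ = (-s) ^ N / N ! := by
      rw [← sum_mul]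
      change abelSum N 0 * _ = _
      rw [abelSum_eq]
      ring
  obtain ⟨k, rfl⟩ := Nat.exists_eq_add_of_le (Nat.lt_succ_iff.mp (mem_range.mp hm))
  rw [← Nat.choose_mul_factorial_mul_factorial (Nat.le_add_right m k), Nat.add_sub_cancel_left]
  have hchoose : ((m + k).choose m : ℝ) ≠ 0 :=
    Nat.cast_ne_zero.mpr (Nat.choose_pos (Nat.le_add_right m k)).ne'
  push_cast
  field_simp
  ring

theorem tsum_abelCoeff_mul_pow_mul_exp_neg {s : ℝ} (hs : |s| ≤ 1 / 10) :
    ∑' m, abelCoeff m / m ! * (s * exp (-s)) ^ m = exp (-s) := by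
  set F : ℕ × ℕ → ℝ := fun p ↦ abelCoeff p.1 / p.1 ! * s ^ p.1 * ((-p.1 * s) ^ p.2 / p.2 !)
  have hrow (m : ℕ) : HasSum (fun k ↦ F (m, k)) (abelCoeff m / m ! * (s * exp (-s)) ^ m) := by
    rw [mul_pow, ← Real.exp_nat_mul, ← mul_assoc, show (m : ℝ) * -s = -m * s by ring]
    exact (Real.hasSum_pow_div_factorial (-m * s)).mul_left (abelCoeff m / m ! * s ^ m)
  have habsrow (m : ℕ) :
      HasSum (fun k ↦ |F (m, k)|) (|abelCoeff m / m !| * (|s| * exp |s|) ^ m) := by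
    rw [mul_pow, ← Real.exp_nat_mul, ← mul_assoc]
    refine ((Real.hasSum_pow_div_factorial (m * |s|)).mul_left _).congr_fun fun k ↦ ?_
    simp only [F, abs_mul, abs_div, abs_pow, abs_neg, Nat.abs_cast]
  have hsmall : |(|s| * exp |s|)| < exp (-1) := by
    rw [abs_of_nonneg (by positivity)]
    have hexp : exp |s| ≤ 3 :=
      ((exp_le_exp.mpr (by linarith)).trans_lt (exp_one_lt_d9.trans (by norm_num))).le
    calc |s| * exp |s| ≤ 1 / 10 * 3 := by gcongr
      _ < exp (-1) := lt_trans (by norm_num) exp_neg_one_gt_d9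
  have hF : Summable F := by
    refine Summable.of_abs ?_
    rw [summable_prod_of_nonneg fun _ ↦ abs_nonneg _]
    refine ⟨fun m ↦ (habsrow m).summable, ?_⟩
    simpa only [(habsrow _).tsum_eq, abs_mul, abs_pow, abs_abs, abs_exp] using
      summable_abs_abelCoeff_mul_pow hsmall
  calc ∑' m, abelCoeff m / m ! * (s * exp (-s)) ^ m = ∑' m, ∑' k, F (m, k) :=
        tsum_congr fun m ↦ (hrow m).tsum_eq.symm
    _ = ∑' p, F p := (hF.tsum_prod' fun m ↦ (hrow m).summable).symm
    _ = ∑' N, ∑ p ∈ antidiagonal N, F p := hF.tsum_sum_antidiagonal.symm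
    _ = ∑' N, (-s) ^ N / N ! := tsum_congr (sum_antidiagonal_abelCoeff · s)
    _ = exp (-s) := (Real.hasSum_pow_div_factorial _).tsum_eq

noncomputable def abelSeries : FormalMultilinearSeries ℝ ℝ ℝ :=
  .ofScalars ℝ fun m ↦ abelCoeff m / m !

lemma abelSeries_sum (z : ℝ) : abelSeries.sum z = ∑' m, abelCoeff m / m ! * z ^ m :=
  FormalMultilinearSeries.ofScalars_sum_eq _ z

lemma exp_neg_one_le_radius_abelSeries : ENNReal.ofReal (exp (-1)) ≤ abelSeries.radius := by
  refine abelSeries.le_radius_of_bound 1 fun m ↦ ?_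
  rw [abelSeries, FormalMultilinearSeries.ofScalars_norm, Real.norm_eq_abs,
    Real.coe_toNNReal _ (exp_pos _).le]
  calc |abelCoeff m / m !| * exp (-1) ^ m ≤ exp 1 ^ m * exp (-1) ^ m := by
        gcongr; exact abs_abelCoeff_div_factorial_le m
    _ = 1 := by rw [← mul_pow, ← exp_add]; simp

lemma abs_mul_exp_neg_lt {s : ℝ} (hs0 : 0 < s) (hs1 : s < 1) : |s * exp (-s)| < exp (-1) := by
  rw [abs_of_pos (by positivity)]
  calc s * exp (-s) < exp (s - 1) * exp (-s) := by
        gcongr; linarith [add_one_lt_exp (sub_ne_zero.mpr hs1.ne)]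
    _ = exp (-1) := by rw [← exp_add]; ring_nf

theorem tone_mul_exp_neg {t : ℝ} (ht0 : 0 < t) (ht1 : t < 1) :
    Tone (t * exp (-t)) = 1 - exp (-t) := by
  have hG : AnalyticOnNhd ℝ (fun s ↦ abelSeries.sum (s * exp (-s))) (Set.Ioo 0 1) := by
    intro s hs
    have hmem : s * exp (-s) ∈ Metric.eball 0 abelSeries.radius := by
      refine lt_of_lt_of_le ?_ exp_neg_one_le_radius_abelSeries
      rw [edist_dist, Real.dist_0_eq_abs]
      exact (ENNReal.ofReal_lt_ofReal_iff (exp_pos _)).mpr (abs_mul_exp_neg_lt hs.1 hs.2)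
    exact (abelSeries.analyticOnNhd _ hmem).comp (f := fun s ↦ s * exp (-s)) (by fun_prop)
  have hnear : (fun s ↦ abelSeries.sum (s * exp (-s))) =ᶠ[𝓝 (1 / 20)] fun s ↦ exp (-s) := by
    filter_upwards [Ioo_mem_nhds (show (-1 / 10 : ℝ) < 1 / 20 by norm_num)
      (show (1 / 20 : ℝ) < 1 / 10 by norm_num)] with s hs
    rw [abelSeries_sum,
      tsum_abelCoeff_mul_pow_mul_exp_neg (abs_le.mpr ⟨by linarith [hs.1], hs.2.le⟩)]
  have heq := hG.eqOn_of_preconnected_of_eventuallyEq (fun s _ ↦ by fun_prop)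
    isPreconnected_Ioo (by norm_num) hnear ⟨ht0, ht1⟩
  have hone := one_sub_tone_eq_tsum (abs_mul_exp_neg_lt ht0 ht1)
  simp only [abelSeries_sum] at heq
  linarith

/-- If `u > 0`, `t ∈ (0,1)` satisfies `e^{−t}/(1−t) = 1+u`, and `c = t·e^{−t}/u`,
then `c/(1 + (1/u)·T_1(u·c)) = 1 − t`. -/
theorem stmt_16 (u t : ℝ) (hu : 0 < u) (ht0 : 0 < t) (ht1 : t < 1)
    (h : Real.exp (-t) / (1 - t) = 1 + u) :
    (t * Real.exp (-t) / u) /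
        (1 + (1 / u) * Tone (u * (t * Real.exp (-t) / u))) = 1 - t := by
  have hexp : exp (-t) = (1 + u) * (1 - t) := by
    rw [← h, div_mul_cancel₀ _ (sub_pos.mpr ht1).ne']
  have hden : 1 + 1 / u * (1 - (1 + u) * (1 - t)) = t * (1 + u) / u := by
    field_simp
    ring
  rw [mul_div_cancel₀ _ hu.ne', tone_mul_exp_neg ht0 ht1, hexp, hden]
  field_simp
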